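/- There exists an absolute constant c > 0 such that the following holds. Under the SIM, fix s ∈ ℝⁿ and ε > 0, and let P⊥ := Iₙ − xxᵀ. Conditioned on any realization of (y₁,…,y_m) satisfying (1/m) Σᵢ yᵢ² ≤ 2ξ², with conditional probability at least 1 − 2e^{−cε} one has |(1/m) Σᵢ yᵢ ⟨P⊥ aᵢ, s⟩| ≤ ξ ‖s‖₂ √ε / √m. -/

import Mathlib

/-!
Because `P⊥` is self-adjoint, `(1/m) Σᵢ wᵢ ⟨P⊥ aᵢ, s⟩ = Σᵢ ⟨aᵢ, zᵢ⟩` with `zᵢ = (wᵢ / m) P⊥ s`.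
For independent standard Gaussian `aᵢ` this is a centred Gaussian, hence sub-Gaussian, with
variance `σ² = Σᵢ ‖zᵢ‖² = (1/m²) Σᵢ wᵢ² ‖P⊥ s‖² ≤ 2ξ² ‖s‖² / m`. The Chernoff bound
`2 exp (-t² / (2σ²))` at `t = ξ ‖s‖ √ε / √m` is then at most `2 exp (-ε / 4)`, so `c = 1/4` works.
-/

open MeasureTheory ProbabilityTheory
open scoped RealInnerProductSpace

/-- The standard Gaussian measure `N(0, Iₙ)` on `EuclideanSpace ℝ (Fin n)`. -/
noncomputable def stdGaussianE (n : ℕ) : Measure (EuclideanSpace ℝ (Fin n)) :=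
  (Measure.pi fun _ : Fin n => gaussianReal 0 1).map
    (MeasurableEquiv.toLp 2 (Fin n → ℝ))

open Real
open scoped NNReal

lemma stdGaussianE_eq_stdGaussian (n : ℕ) :
    stdGaussianE n = stdGaussian (EuclideanSpace ℝ (Fin n)) :=
  map_pi_eq_stdGaussian

lemma stdGaussian_map_inner_right {E : Type*} [NormedAddCommGroup E] [InnerProductSpace ℝ E]
    [FiniteDimensional ℝ E] [MeasurableSpace E] [BorelSpace E] (z : E) :
    (stdGaussian E).map (⟪·, z⟫) = gaussianReal 0 (‖z‖₊ ^ 2) := by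
  have h := IsGaussian.map_eq_gaussianReal (μ := stdGaussian E) (innerSL ℝ z)
  rw [integral_strongDual_stdGaussian, variance_dual_stdGaussian, innerSL_apply_norm] at h
  convert h using 2
  · ext v
    simp [real_inner_comm]
  · ext
    simp

lemma hasSubgaussianMGF_id_gaussianReal (v : ℝ≥0) :
    HasSubgaussianMGF id v (gaussianReal 0 v) where
  integrable_exp_mul t := integrable_exp_mul_gaussianReal t
  mgf_le t := by simp [mgf_id_gaussianReal]

namespace ProbabilityTheory.HasSubgaussianMGF

variable {Ω : Type*} [MeasurableSpace Ω] {μ : Measure Ω} {X : Ω → ℝ}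

lemma of_map_eq_gaussianReal {v : ℝ≥0} (hX : AEMeasurable X μ)
    (h : μ.map X = gaussianReal 0 v) : HasSubgaussianMGF X v μ :=
  (id_map_iff hX).1 (h ▸ hasSubgaussianMGF_id_gaussianReal v)

lemma measure_abs_ge_le {c : ℝ≥0} (h : HasSubgaussianMGF X c μ) {ε : ℝ} (hε : 0 ≤ ε) :
    μ.real {ω | ε ≤ |X ω|} ≤ 2 * exp (-ε ^ 2 / (2 * c)) := by
  have hsplit : {ω | ε ≤ |X ω|} = {ω | ε ≤ X ω} ∪ {ω | ε ≤ (-X) ω} := by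
    ext ω
    simp [le_abs', le_neg, or_comm]
  rw [hsplit, two_mul]
  exact (measureReal_union_le _ _).trans
    (add_le_add (h.measure_ge_le hε) (h.neg.measure_ge_le hε))

end ProbabilityTheory.HasSubgaussianMGF

section PiStdGaussian

variable {E : Type*} [NormedAddCommGroup E] [InnerProductSpace ℝ E] [FiniteDimensional ℝ E]
  [MeasurableSpace E] [BorelSpace E] {ι : Type*} [Fintype ι]

lemma hasSubgaussianMGF_sum_inner_pi_stdGaussian (z : ι → E) :
    HasSubgaussianMGF (fun v : ι → E => ∑ i, ⟪v i, z i⟫) (∑ i, ‖z i‖₊ ^ 2)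
      (Measure.pi fun _ => stdGaussian E) := by
  have hindep : iIndepFun (fun i (v : ι → E) => ⟪v i, z i⟫) (Measure.pi fun _ => stdGaussian E) :=
    iIndepFun_pi (X := fun i u => ⟪u, z i⟫) fun i => by fun_prop
  refine HasSubgaussianMGF.sum_of_iIndepFun hindep fun i _ => ?_
  refine HasSubgaussianMGF.of_map (X := (⟪·, z i⟫)) (measurable_pi_apply i).aemeasurable ?_
  rw [(measurePreserving_eval _ i).map_eq]
  exact .of_map_eq_gaussianReal (by fun_prop) (stdGaussian_map_inner_right (z i))

lemma pi_stdGaussian_abs_sum_inner_gt_le (z : ι → E) {t r : ℝ} (ht : 0 ≤ t)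
    (hr : 2 * r * ∑ i, ‖z i‖ ^ 2 ≤ t ^ 2) :
    (Measure.pi fun _ : ι => stdGaussian E).real {v | t < |∑ i, ⟪v i, z i⟫|} ≤ 2 * exp (-r) := by
  obtain hσ | hσ := (Finset.sum_nonneg fun i (_ : i ∈ Finset.univ) => sq_nonneg ‖z i‖).eq_or_lt'
  · have hz (i : ι) : z i = 0 := by
      simpa using (Finset.sum_eq_zero_iff_of_nonneg fun i _ => sq_nonneg ‖z i‖).1 hσ i
        (Finset.mem_univ i)
    simp only [hz, inner_zero_right, Finset.sum_const_zero, abs_zero, ht.not_gt, Set.ofPred_false,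
      measureReal_empty]
    positivity
  calc _ ≤ (Measure.pi fun _ : ι => stdGaussian E).real {v | t ≤ |∑ i, ⟪v i, z i⟫|} :=
        measureReal_mono fun v (hv : t < _) => hv.le
    _ ≤ 2 * exp (-t ^ 2 / (2 * ∑ i, ‖z i‖ ^ 2)) := by
        simpa using (hasSubgaussianMGF_sum_inner_pi_stdGaussian z).measure_abs_ge_le ht
    _ ≤ 2 * exp (-r) := by
        gcongr
        rw [neg_div, neg_le_neg_iff, le_div_iff₀ (by positivity)]
        linarith

end PiStdGaussian

lemma norm_sub_inner_smul_le {E : Type*} [NormedAddCommGroup E] [InnerProductSpace ℝ E] {x : E}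
    (hx : ‖x‖ = 1) (s : E) : ‖s - ⟪x, s⟫ • x‖ ≤ ‖s‖ := by
  have h : ‖s - ⟪x, s⟫ • x‖ ^ 2 = ‖s‖ ^ 2 - ⟪x, s⟫ ^ 2 := by
    rw [norm_sub_sq_real, real_inner_smul_right, norm_smul, mul_pow, hx, Real.norm_eq_abs, sq_abs,
      real_inner_comm]
    ring
  exact (pow_le_pow_iff_left₀ (norm_nonneg _) (norm_nonneg _) two_ne_zero).1
    (by linarith [sq_nonneg ⟪x, s⟫])

lemma inner_sub_inner_smul_left_eq {E : Type*} [NormedAddCommGroup E] [InnerProductSpace ℝ E]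
    (x a s : E) : ⟪a - ⟪a, x⟫ • x, s⟫ = ⟪a, s - ⟪x, s⟫ • x⟫ := by
  simp only [inner_sub_left, inner_sub_right, real_inner_smul_left, real_inner_smul_right,
    real_inner_comm x]
  ring

/-- There is an absolute constant `c > 0` such that, under the SIM,
conditioned on any realization `w = (w₁, …, w_m)` of `(y₁, …, y_m)` satisfying
`(1/m) Σᵢ wᵢ² ≤ 2ξ²` (under which the projections `P⊥ aᵢ = aᵢ − ⟨aᵢ, x⟩ x` remain i.i.d.
standard Gaussian on the orthogonal complement of `x`), with conditional probability at least
`1 − 2e^{−cε}` one has `|(1/m) Σᵢ wᵢ ⟨P⊥ aᵢ, s⟩| ≤ ξ ‖s‖₂ √ε / √m`.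
Here `ξ² := E[f(g)²]`, where the random nonlinearity is `F (· )` with noise distribution `κ`. -/
theorem stmt2 :
    ∃ c : ℝ, 0 < c ∧
      ∀ (Ω Θ : Type) (_ : MeasurableSpace Ω) (_ : MeasurableSpace Θ)
        (P : Measure Ω) (_ : IsProbabilityMeasure P)
        (κ : Measure Θ) (_ : IsProbabilityMeasure κ)
        (n m : ℕ) (_ : 0 < m)
        (a : Fin m → Ω → EuclideanSpace ℝ (Fin n)) (_ : ∀ i, Measurable (a i))
        -- the aᵢ are i.i.d. standard Gaussian vectors N(0, Iₙ)
        (_ : Measure.map (fun ω => fun i => a i ω) P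
          = Measure.pi fun _ : Fin m => stdGaussianE n)
        (x : EuclideanSpace ℝ (Fin n)) (_ : ‖x‖ = 1)
        (F : Θ → ℝ → ℝ) (_ : Measurable (Function.uncurry F))
        (ξ : ℝ) (_ : 0 ≤ ξ)
        -- ξ² := E[f(g)²]
        (_ : ξ ^ 2 = ∫ p : Θ × ℝ, (F p.1 p.2) ^ 2 ∂(κ.prod (gaussianReal 0 1)))
        -- w is a realization of (y₁, …, y_m) satisfying (1/m) Σᵢ wᵢ² ≤ 2ξ²
        (w : Fin m → ℝ) (_ : (m : ℝ)⁻¹ * ∑ i, (w i) ^ 2 ≤ 2 * ξ ^ 2)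
        (s : EuclideanSpace ℝ (Fin n)) (ε : ℝ) (_ : 0 < ε),
        (P {ω | abs ((m : ℝ)⁻¹ * ∑ i, w i * ⟪a i ω - ⟪a i ω, x⟫ • x, s⟫)
            ≤ ξ * ‖s‖ * Real.sqrt ε / Real.sqrt m}).toReal
          ≥ 1 - 2 * Real.exp (-(c * ε)) := by
  refine ⟨1 / 4, by norm_num, ?_⟩
  intro Ω Θ _ _ P _ κ _ n m _ a ha hmap x hx F _ ξ hξ _ w hw s ε hε
  set p := s - ⟪x, s⟫ • x
  set z : Fin m → EuclideanSpace ℝ (Fin n) := fun i => ((m : ℝ)⁻¹ * w i) • p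
  set t := ξ * ‖s‖ * √ε / √m
  have hS (ω : Ω) : (m : ℝ)⁻¹ * ∑ i, w i * ⟪a i ω - ⟪a i ω, x⟫ • x, s⟫ = ∑ i, ⟪a i ω, z i⟫ := by
    simp only [inner_sub_inner_smul_left_eq, Finset.mul_sum, z, p, real_inner_smul_right, mul_assoc]
  have hr : 2 * (1 / 4 * ε) * ∑ i, ‖z i‖ ^ 2 ≤ t ^ 2 := by
    have hp := norm_sub_inner_smul_le hx s
    have hz : ∑ i, ‖z i‖ ^ 2 = (m : ℝ)⁻¹ * ((m : ℝ)⁻¹ * ∑ i, w i ^ 2) * ‖p‖ ^ 2 := by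
      simp only [z, norm_smul, mul_pow, norm_mul, norm_inv, Real.norm_eq_abs, Nat.abs_cast, sq_abs,
        Finset.mul_sum, Finset.sum_mul]
      congr! 1 with i; ring
    calc _ ≤ 2 * (1 / 4 * ε) * ((m : ℝ)⁻¹ * (2 * ξ ^ 2) * ‖s‖ ^ 2) := by rw [hz]; gcongr
      _ = t ^ 2 := by
        rw [div_pow, mul_pow, mul_pow, Real.sq_sqrt hε.le, Real.sq_sqrt m.cast_nonneg]; ring
  have hmeas : MeasurableSet {v : Fin m → EuclideanSpace ℝ (Fin n) | t < |∑ i, ⟪v i, z i⟫|} :=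
    measurableSet_lt measurable_const (by fun_prop)
  have hevent : {ω | |(m : ℝ)⁻¹ * ∑ i, w i * ⟪a i ω - ⟪a i ω, x⟫ • x, s⟫| ≤ t}
      = (fun ω i => a i ω) ⁻¹' {v | t < |∑ i, ⟪v i, z i⟫|}ᶜ := by
    ext ω; simp [hS, not_lt]
  have htail := pi_stdGaussian_abs_sum_inner_gt_le z (by positivity) hr
  rw [stdGaussianE_eq_stdGaussian] at hmap
  rw [hevent, ← Measure.map_apply (by fun_prop) hmeas.compl, hmap, ← measureReal_def,
    measureReal_compl hmeas, probReal_univ]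
  linarith
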